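/- arXiv:2303.10274 — 3 statements merged into one kernel-verified Lean document; each statement's English description precedes it below -/
import Mathlib

section
/- Let n ≥ 1 and let p be a unit vector in ℝ^{n+1}. For all q, r on the unit sphere S^n ⊂ ℝ^{n+1} with q ≠ p and r ≠ p, the stereographic projection satisfies the distance identity |σ_p(r) − σ_p(q)| = 2|r − q| / (|q − p| · |r − p|). -/
open scoped RealInnerProductSpace

/-- Stereographic projection from a unit vector `p` of the unit sphere (minus `p`)
onto the hyperplane `(ℝp)ᗮ` through the origin. -/
noncomputable def stereoProj {n : ℕ} (p x : EuclideanSpace ℝ (Fin (n + 1))) :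
    EuclideanSpace ℝ (Fin (n + 1)) :=
  (1 - ⟪x, p⟫)⁻¹ • (x - ⟪x, p⟫ • p)

set_option maxHeartbeats 1000000 in
theorem stereoProj_dist_identity (n : ℕ) (hn : 1 ≤ n)
    (p q r : EuclideanSpace ℝ (Fin (n + 1))) (hp : ‖p‖ = 1)
    (hq : ‖q‖ = 1) (hr : ‖r‖ = 1) (hqp : q ≠ p) (hrp : r ≠ p) :
    ‖stereoProj p r - stereoProj p q‖ = 2 * ‖r - q‖ / (‖q - p‖ * ‖r - p‖) := by
  have hpp : ⟪p, p⟫ = 1 := by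
    rw [real_inner_self_eq_norm_mul_norm, hp]; norm_num
  have hqq : ⟪q, q⟫ = 1 := by
    rw [real_inner_self_eq_norm_mul_norm, hq]; norm_num
  have hrr : ⟪r, r⟫ = 1 := by
    rw [real_inner_self_eq_norm_mul_norm, hr]; norm_num
  have ha1 : ⟪q, p⟫ < 1 := by
    have h := real_inner_le_norm q p
    rw [hq, hp, mul_one] at h
    rcases h.lt_or_eq with h | h
    · exact h
    · exact absurd ((inner_eq_one_iff_of_norm_eq_one hq hp).mp h) hqp
  have hb1 : ⟪r, p⟫ < 1 := by
    have h := real_inner_le_norm r p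
    rw [hr, hp, mul_one] at h
    rcases h.lt_or_eq with h | h
    · exact h
    · exact absurd ((inner_eq_one_iff_of_norm_eq_one hr hp).mp h) hrp
  set a := ⟪q, p⟫ with haDef
  set b := ⟪r, p⟫ with hbDef
  set c := ⟪r, q⟫ with hcDef
  have hpq' : ⟪p, q⟫ = a := by rw [real_inner_comm]
  have hpr' : ⟪p, r⟫ = b := by rw [real_inner_comm]
  have hqr' : ⟪q, r⟫ = c := by rw [real_inner_comm]
  have ha0 : (0:ℝ) < 1 - a := by linarith
  have hb0 : (0:ℝ) < 1 - b := by linarith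
  have hnormqp : ‖q - p‖ ^ 2 = 2 - 2 * a := by
    rw [← real_inner_self_eq_norm_sq]
    simp only [inner_sub_left, inner_sub_right, hqq, hpp, hpq', ← haDef]
    ring
  have hnormrp : ‖r - p‖ ^ 2 = 2 - 2 * b := by
    rw [← real_inner_self_eq_norm_sq]
    simp only [inner_sub_left, inner_sub_right, hrr, hpp, hpr', ← hbDef]
    ring
  have hnormrq : ‖r - q‖ ^ 2 = 2 - 2 * c := by
    rw [← real_inner_self_eq_norm_sq]
    simp only [inner_sub_left, inner_sub_right, hrr, hqq, hqr', ← hcDef]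
    ring
  have hqp0 : (0:ℝ) < ‖q - p‖ := by
    rw [norm_pos_iff]; exact sub_ne_zero.mpr hqp
  have hrp0 : (0:ℝ) < ‖r - p‖ := by
    rw [norm_pos_iff]; exact sub_ne_zero.mpr hrp
  have key : ‖stereoProj p r - stereoProj p q‖ ^ 2 = (2 - 2 * c) / ((1 - a) * (1 - b)) := by
    rw [← real_inner_self_eq_norm_sq]
    simp only [stereoProj, inner_sub_left, inner_sub_right, real_inner_smul_left,
      real_inner_smul_right, hpp, hqq, hrr, hpq', hpr', hqr', ← haDef, ← hbDef, ← hcDef]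
    field_simp
    ring
  have hR : 0 ≤ 2 * ‖r - q‖ / (‖q - p‖ * ‖r - p‖) := by positivity
  have hsq : (2 * ‖r - q‖ / (‖q - p‖ * ‖r - p‖)) ^ 2 = (2 - 2 * c) / ((1 - a) * (1 - b)) := by
    rw [div_pow, mul_pow, mul_pow, hnormrq, hnormqp, hnormrp,
      div_eq_div_iff (mul_pos (by linarith : (0:ℝ) < 2 - 2 * a)
        (by linarith : (0:ℝ) < 2 - 2 * b)).ne' (mul_pos ha0 hb0).ne']
    ring
  nlinarith [key, hsq, norm_nonneg (stereoProj p r - stereoProj p q), hR,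
    sq_nonneg (‖stereoProj p r - stereoProj p q‖ - 2 * ‖r - q‖ / (‖q - p‖ * ‖r - p‖)),
    sq_nonneg (‖stereoProj p r - stereoProj p q‖ + 2 * ‖r - q‖ / (‖q - p‖ * ‖r - p‖))]
end

section
/- Let n ≥ 1, let p be a unit vector in ℝ^{n+1}, and let p' ∈ S^n with p' ≠ p. For every q ∈ S^n with q ≠ p and q ≠ p', one has |q − p| / |q − p'| = 2 / (|p − p'| · |σ_p(q) − σ_p(p')|). -/
open scoped RealInnerProductSpace

lemma stereoProj_dist {n : ℕ} (p x y : EuclideanSpace ℝ (Fin (n + 1)))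
    (hp : ‖p‖ = 1) (hx : ‖x‖ = 1) (hy : ‖y‖ = 1) (hxp : x ≠ p) (hyp : y ≠ p) :
    ‖stereoProj p x - stereoProj p y‖ = 2 * ‖x - y‖ / (‖x - p‖ * ‖y - p‖) := by
  set a := ⟪x, p⟫ with ha'
  set b := ⟪y, p⟫ with hb'
  set c := ⟪x, y⟫ with hc'
  have hxx : ⟪x, x⟫ = 1 := by rw [real_inner_self_eq_norm_sq, hx]; norm_num
  have hyy : ⟪y, y⟫ = 1 := by rw [real_inner_self_eq_norm_sq, hy]; norm_num
  have hpp : ⟪p, p⟫ = 1 := by rw [real_inner_self_eq_norm_sq, hp]; norm_num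
  have ha : a < 1 := (inner_lt_one_iff_real_of_norm_eq_one hx hp).mpr hxp
  have hb : b < 1 := (inner_lt_one_iff_real_of_norm_eq_one hy hp).mpr hyp
  have hxp2 : ‖x - p‖ ^ 2 = 2 - 2 * a := by
    rw [norm_sub_sq_real, hx, hp]; ring
  have hyp2 : ‖y - p‖ ^ 2 = 2 - 2 * b := by
    rw [norm_sub_sq_real, hy, hp]; ring
  have hxy2 : ‖x - y‖ ^ 2 = 2 - 2 * c := by
    rw [norm_sub_sq_real, hx, hy]; ring
  have hxpn : ‖x - p‖ ≠ 0 := norm_ne_zero_iff.mpr (sub_ne_zero.mpr hxp)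
  have hypn : ‖y - p‖ ≠ 0 := norm_ne_zero_iff.mpr (sub_ne_zero.mpr hyp)
  have hL : ‖stereoProj p x - stereoProj p y‖ ^ 2
      = (2 - 2 * c) / ((1 - a) * (1 - b)) := by
    have e1 : ⟪x, p⟫ = a := ha'.symm
    have e2 : ⟪y, p⟫ = b := hb'.symm
    have e3 : ⟪x, y⟫ = c := hc'.symm
    have e4 : ⟪p, x⟫ = a := (real_inner_comm x p).trans e1
    have e5 : ⟪p, y⟫ = b := (real_inner_comm y p).trans e2
    have e6 : ⟪y, x⟫ = c := (real_inner_comm x y).trans e3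
    rw [← real_inner_self_eq_norm_sq]
    simp only [stereoProj, inner_sub_left, inner_sub_right,
      real_inner_smul_left, real_inner_smul_right, hxx, hyy, hpp,
      e1, e2, e3, e4, e5, e6]
    clear_value a b c
    have ha0 : (1 : ℝ) - a ≠ 0 := by linarith
    have hb0 : (1 : ℝ) - b ≠ 0 := by linarith
    field_simp
    ring
  have hR : (2 * ‖x - y‖ / (‖x - p‖ * ‖y - p‖)) ^ 2
      = (2 - 2 * c) / ((1 - a) * (1 - b)) := by
    have ha0 : (1 : ℝ) - a ≠ 0 := by linarith
    have hb0 : (1 : ℝ) - b ≠ 0 := by linarith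
    have hd : (2 - 2 * a) * (2 - 2 * b) ≠ 0 := by
      apply mul_ne_zero <;> intro h <;> [exact ha0 (by linarith); exact hb0 (by linarith)]
    rw [div_pow, mul_pow, mul_pow, hxp2, hyp2, hxy2, div_eq_div_iff hd (mul_ne_zero ha0 hb0)]
    ring
  have key := hL.trans hR.symm
  have h1 : (0:ℝ) ≤ ‖stereoProj p x - stereoProj p y‖ := norm_nonneg _
  have h2 : (0:ℝ) ≤ 2 * ‖x - y‖ / (‖x - p‖ * ‖y - p‖) := by positivity
  calc ‖stereoProj p x - stereoProj p y‖
      = Real.sqrt (‖stereoProj p x - stereoProj p y‖ ^ 2) := (Real.sqrt_sq h1).symm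
    _ = Real.sqrt ((2 * ‖x - y‖ / (‖x - p‖ * ‖y - p‖)) ^ 2) := by rw [key]
    _ = 2 * ‖x - y‖ / (‖x - p‖ * ‖y - p‖) := Real.sqrt_sq h2

theorem stereoProj_ratio_identity (n : ℕ) (hn : 1 ≤ n)
    (p p' q : EuclideanSpace ℝ (Fin (n + 1))) (hp : ‖p‖ = 1)
    (hp' : ‖p'‖ = 1) (hp'p : p' ≠ p)
    (hq : ‖q‖ = 1) (hqp : q ≠ p) (hqp' : q ≠ p') :
    ‖q - p‖ / ‖q - p'‖ = 2 / (‖p - p'‖ * ‖stereoProj p q - stereoProj p p'‖) := by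
  rw [stereoProj_dist p q p' hp hq hp' hqp hp'p]
  have h1 : ‖q - p‖ ≠ 0 := norm_ne_zero_iff.mpr (sub_ne_zero.mpr hqp)
  have h2 : ‖q - p'‖ ≠ 0 := norm_ne_zero_iff.mpr (sub_ne_zero.mpr hqp')
  have h3 : ‖p' - p‖ ≠ 0 := norm_ne_zero_iff.mpr (sub_ne_zero.mpr hp'p)
  rw [norm_sub_rev p p']
  field_simp
end

section
/- Let n ≥ 3, let Γ be a finite subgroup of the orthogonal group O(n+1) acting on the unit sphere S^n ⊂ ℝ^{n+1}, and let p ∈ S^n be a point with γ·p ≠ p for every γ ∈ Γ with γ ≠ 1. Then for every q ∈ S^n not in the orbit Γ·p, the Green function of the quotient transforms under stereographic projection as: ∑_{γ∈Γ} 1/|q − γ·p|^{n−2} = (1 + ∑_{γ∈Γ, γ≠1} m_γ / |σ_p(q) − σ_p(γ·p)|^{n−2}) · 1/|q − p|^{n−2}, where m_γ := 2^{n−2} / |p − γ·p|^{n−2}. (This is the key identity showing that the conformal stereographic projection of the standard metric on S^n/Γ lifts to the Majumdar–Papapetrou metric (1 + ∑_{γ≠1} m_γ/|· − σ_p(γ·p)|^{n−2})^{4/(n−2)}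 δ_eucl on ℝ^n, with singularities at the projections of the orbit of p.) -/
open scoped RealInnerProductSpace

section Aux

variable {E : Type*} [NormedAddCommGroup E] [InnerProductSpace ℝ E]

lemma inner_lt_one_aux (x p : E) (hx : ‖x‖ = 1) (hp : ‖p‖ = 1) (hxp : x ≠ p) : ⟪x, p⟫ < 1 := by
  have h1 : ⟪x, p⟫ ≤ 1 := by
    have := real_inner_le_norm x p
    rwa [hx, hp, one_mul] at this
  rcases lt_or_eq_of_le h1 with h | h
  · exact h
  · exact absurd ((inner_eq_one_iff_of_norm_eq_one hx hp).mp h) hxp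

lemma sq_stereo_aux (p x y : E) (hp : ‖p‖ = 1) (hx : ‖x‖ = 1)
    (hy : ‖y‖ = 1) (hxp : x ≠ p) (hyp : y ≠ p) :
    ‖(1 - ⟪x, p⟫)⁻¹ • (x - ⟪x, p⟫ • p) - (1 - ⟪y, p⟫)⁻¹ • (y - ⟪y, p⟫ • p)‖ ^ 2
      * ((1 - ⟪x, p⟫) * (1 - ⟪y, p⟫)) = ‖x - y‖ ^ 2 := by
  have hax : (0:ℝ) < 1 - ⟪x, p⟫ := by linarith [inner_lt_one_aux x p hx hp hxp]
  have hay : (0:ℝ) < 1 - ⟪y, p⟫ := by linarith [inner_lt_one_aux y p hy hp hyp]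
  have hxx : ⟪x, x⟫ = (1:ℝ) := by rw [real_inner_self_eq_norm_sq, hx]; norm_num
  have hyy : ⟪y, y⟫ = (1:ℝ) := by rw [real_inner_self_eq_norm_sq, hy]; norm_num
  have hpp : ⟪p, p⟫ = (1:ℝ) := by rw [real_inner_self_eq_norm_sq, hp]; norm_num
  have e : ∀ v : E, ‖v‖ ^ 2 = ⟪v, v⟫ := fun v => (real_inner_self_eq_norm_sq v).symm
  rw [e, e]
  simp only [inner_sub_left, inner_sub_right, real_inner_smul_left, real_inner_smul_right,
    hxx, hyy, hpp, real_inner_comm y x, real_inner_comm p x, real_inner_comm p y]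
  have ha' : (1:ℝ) - ⟪p, x⟫ ≠ 0 := by rw [real_inner_comm]; exact ne_of_gt hax
  have hb' : (1:ℝ) - ⟪p, y⟫ ≠ 0 := by rw [real_inner_comm]; exact ne_of_gt hay
  set a := ⟪p, x⟫ with ha
  set b := ⟪p, y⟫ with hb
  set c := ⟪y, x⟫ with hc
  field_simp
  ring

lemma norm_sub_eq_sqrt_aux (x p : E) (hx : ‖x‖ = 1) (hp : ‖p‖ = 1) :
    ‖x - p‖ = Real.sqrt 2 * Real.sqrt (1 - ⟪x, p⟫) := by
  have h : ‖x - p‖ ^ 2 = 2 * (1 - ⟪x, p⟫) := by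
    rw [norm_sub_sq_real, hx, hp]; ring
  rw [← Real.sqrt_sq (norm_nonneg (x - p)), h, Real.sqrt_mul (by norm_num : (0:ℝ) ≤ 2)]

lemma stereo_dist_aux (p x y : E) (hp : ‖p‖ = 1) (hx : ‖x‖ = 1)
    (hy : ‖y‖ = 1) (hxp : x ≠ p) (hyp : y ≠ p) :
    ‖(1 - ⟪x, p⟫)⁻¹ • (x - ⟪x, p⟫ • p) - (1 - ⟪y, p⟫)⁻¹ • (y - ⟪y, p⟫ • p)‖
      = ‖x - y‖ / (Real.sqrt (1 - ⟪x, p⟫) * Real.sqrt (1 - ⟪y, p⟫)) := by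
  have hax : (0:ℝ) < 1 - ⟪x, p⟫ := by linarith [inner_lt_one_aux x p hx hp hxp]
  have hay : (0:ℝ) < 1 - ⟪y, p⟫ := by linarith [inner_lt_one_aux y p hy hp hyp]
  set L := ‖(1 - ⟪x, p⟫)⁻¹ • (x - ⟪x, p⟫ • p) - (1 - ⟪y, p⟫)⁻¹ • (y - ⟪y, p⟫ • p)‖ with hL
  have hsq : L ^ 2 = (‖x - y‖ / (Real.sqrt (1 - ⟪x, p⟫) * Real.sqrt (1 - ⟪y, p⟫))) ^ 2 := by
    have h := sq_stereo_aux p x y hp hx hy hxp hyp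
    rw [div_pow, mul_pow, Real.sq_sqrt hax.le, Real.sq_sqrt hay.le,
      eq_div_iff (by positivity)]
    exact h
  have h1 : (0:ℝ) ≤ L := norm_nonneg _
  have h2 : (0:ℝ) ≤ ‖x - y‖ / (Real.sqrt (1 - ⟪x, p⟫) * Real.sqrt (1 - ⟪y, p⟫)) := by
    positivity
  calc L = Real.sqrt (L ^ 2) := (Real.sqrt_sq h1).symm
    _ = Real.sqrt ((‖x - y‖ / (Real.sqrt (1 - ⟪x, p⟫) * Real.sqrt (1 - ⟪y, p⟫))) ^ 2) := by
        rw [hsq]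
    _ = _ := Real.sqrt_sq h2

lemma real_aux (k : ℕ) (sa sb r : ℝ) (hsa : 0 < sa) (hsb : 0 < sb) (hr : 0 < r) :
    ((2:ℝ)^k / (Real.sqrt 2 * sb)^k) / ((r/(sa*sb))^k) * (1/(Real.sqrt 2 * sa)^k)
      = 1/r^k := by
  have hs2 : (0:ℝ) < Real.sqrt 2 := by positivity
  have h2k : (2:ℝ)^k = Real.sqrt 2 ^ k * Real.sqrt 2 ^ k := by
    rw [← mul_pow, Real.mul_self_sqrt (by norm_num)]
  rw [h2k]
  field_simp
  have hb1 : sb ^ k * sb⁻¹ ^ k = 1 := by rw [← mul_pow, mul_inv_cancel₀ hsb.ne', one_pow]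
  have ha1 : sa ^ k * sa⁻¹ ^ k = 1 := by rw [← mul_pow, mul_inv_cancel₀ hsa.ne', one_pow]
  linear_combination (-(Real.sqrt 2 ^ (k * 2) * r ^ k) * (sa ^ k * sa⁻¹ ^ k)) * hb1
    + (-(Real.sqrt 2 ^ (k * 2) * r ^ k)) * ha1

end Aux

open scoped Classical in
/-- The key identity: the Green function of the quotient `Sⁿ/Γ`, lifted to the sphere,
transforms under stereographic projection into the Majumdar–Papapetrou conformal factor
`1 + ∑_{γ ≠ 1} m_γ / |σ_p(q) - σ_p(γ·p)|^{n-2}` times the Green kernel `1/|q-p|^{n-2}`,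
where `m_γ = 2^{n-2} / |p - γ·p|^{n-2}`. Here the orthogonal group `O(n+1)` is the
group of linear isometric equivalences of `ℝ^{n+1}`. -/
theorem green_function_stereoProj_majumdar_papapetrou (n : ℕ) (hn : 3 ≤ n)
    (Γ : Subgroup (EuclideanSpace ℝ (Fin (n + 1)) ≃ₗᵢ[ℝ] EuclideanSpace ℝ (Fin (n + 1))))
    [Fintype Γ]
    (p : EuclideanSpace ℝ (Fin (n + 1))) (hp : ‖p‖ = 1)
    (hfree : ∀ γ : Γ, γ ≠ 1 → (γ : EuclideanSpace ℝ (Fin (n + 1)) ≃ₗᵢ[ℝ]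
      EuclideanSpace ℝ (Fin (n + 1))) p ≠ p)
    (q : EuclideanSpace ℝ (Fin (n + 1))) (hq : ‖q‖ = 1)
    (hq_orbit : ∀ γ : Γ, q ≠ (γ : EuclideanSpace ℝ (Fin (n + 1)) ≃ₗᵢ[ℝ]
      EuclideanSpace ℝ (Fin (n + 1))) p) :
    ∑ γ : Γ, 1 / ‖q - (γ : EuclideanSpace ℝ (Fin (n + 1)) ≃ₗᵢ[ℝ]
        EuclideanSpace ℝ (Fin (n + 1))) p‖ ^ (n - 2) =
      (1 + ∑ γ ∈ Finset.univ.filter (fun γ : Γ => γ ≠ 1),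
          ((2 : ℝ) ^ (n - 2) / ‖p - (γ : EuclideanSpace ℝ (Fin (n + 1)) ≃ₗᵢ[ℝ]
              EuclideanSpace ℝ (Fin (n + 1))) p‖ ^ (n - 2)) /
            ‖stereoProj p q - stereoProj p ((γ : EuclideanSpace ℝ (Fin (n + 1)) ≃ₗᵢ[ℝ]
              EuclideanSpace ℝ (Fin (n + 1))) p)‖ ^ (n - 2)) *
        (1 / ‖q - p‖ ^ (n - 2)) := by
  set k := n - 2 with hk
  -- notation for the action
  set gp : Γ → EuclideanSpace ℝ (Fin (n + 1)) := fun γ =>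
    (γ : EuclideanSpace ℝ (Fin (n + 1)) ≃ₗᵢ[ℝ] EuclideanSpace ℝ (Fin (n + 1))) p with hgp
  have hgp_norm : ∀ γ : Γ, ‖gp γ‖ = 1 := fun γ => by
    simp [hgp, LinearIsometryEquiv.norm_map, hp]
  have hgp_one : gp 1 = p := by simp [hgp]
  have hqp : q ≠ p := by simpa using hq_orbit 1
  -- per-γ identity for γ ≠ 1
  have key : ∀ γ : Γ, γ ≠ 1 →
      ((2 : ℝ) ^ k / ‖p - gp γ‖ ^ k) /
          ‖stereoProj p q - stereoProj p (gp γ)‖ ^ k * (1 / ‖q - p‖ ^ k)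
        = 1 / ‖q - gp γ‖ ^ k := by
    intro γ hγ
    have hgpp : gp γ ≠ p := hfree γ hγ
    have hqgp : q ≠ gp γ := hq_orbit γ
    have hax : (0:ℝ) < 1 - ⟪q, p⟫ := by
      linarith [inner_lt_one_aux q p hq hp hqp]
    have hay : (0:ℝ) < 1 - ⟪gp γ, p⟫ := by
      linarith [inner_lt_one_aux (gp γ) p (hgp_norm γ) hp hgpp]
    have hr : (0:ℝ) < ‖q - gp γ‖ := by
      rw [norm_pos_iff]
      exact sub_ne_zero_of_ne hqgp
    have h1 : ‖q - p‖ = Real.sqrt 2 * Real.sqrt (1 - ⟪q, p⟫) :=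
      norm_sub_eq_sqrt_aux q p hq hp
    have h2 : ‖p - gp γ‖ = Real.sqrt 2 * Real.sqrt (1 - ⟪gp γ, p⟫) := by
      rw [norm_sub_rev]
      exact norm_sub_eq_sqrt_aux (gp γ) p (hgp_norm γ) hp
    have h3 : ‖stereoProj p q - stereoProj p (gp γ)‖
        = ‖q - gp γ‖ / (Real.sqrt (1 - ⟪q, p⟫) * Real.sqrt (1 - ⟪gp γ, p⟫)) := by
      show ‖(1 - ⟪q, p⟫)⁻¹ • (q - ⟪q, p⟫ • p) - (1 - ⟪gp γ, p⟫)⁻¹ • (gp γ - ⟪gp γ, p⟫ • p)‖ = _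
      exact stereo_dist_aux p q (gp γ) hp hq (hgp_norm γ) hqp hgpp
    rw [h1, h2, h3]
    exact real_aux k (Real.sqrt (1 - ⟪q, p⟫)) (Real.sqrt (1 - ⟪gp γ, p⟫)) ‖q - gp γ‖
      (Real.sqrt_pos.mpr hax) (Real.sqrt_pos.mpr hay) hr
  -- restructure the sum
  rw [add_mul, one_mul, Finset.sum_mul]
  rw [Finset.sum_congr rfl (fun γ hγ => key γ (Finset.mem_filter.mp hγ).2)]
  rw [Finset.filter_ne' Finset.univ (1 : Γ)]
  rw [← Finset.add_sum_erase Finset.univ _ (Finset.mem_univ (1 : Γ))]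
  simp [hgp]
end
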